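/- The encoding of a polynomial as an h10c instance is correct: for every arity ar and polynomial P, isSolvable ar P holds if and only if H10cSat (ar, posMonomials P, negMonomials P) holds, i.e., there exists n with evalNatPoly (posMonomials P) (decodeK ar n) = evalNatPoly (negMonomials P) (decodeK ar n). -/

import Mathlib

/-!
Writing every integer coefficient as `c = c.toNat - (-c).toNat` (one of the two being zero)
splits `evalPoly P` into the difference of the nat-polynomials `posMonomials P` and
`negMonomials P`, so `P` vanishes exactly where these two agree.
-/

namespace Rice

/-- A program maps an input and a fuel bound to an optional output. -/
def Program := ℕ → ℕ → Option ℕ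

/-- Observational equivalence: eventual agreement at every input. -/
def ObsEquiv (e f : Program) : Prop :=
  ∀ x, ∃ N, ∀ k, k ≥ N → e x k = f x k

/-- Stable termination on input 0. -/
def TerminatesPred (e : Program) : Prop :=
  ∃ fuel v, e 0 fuel = some v ∧ ∀ fuel', fuel' ≥ fuel → e 0 fuel' = some v

/-- A program is stable (monotone in fuel). -/
def Stable (e : Program) : Prop :=
  ∀ x k v, e x k = some v → ∀ k', k' ≥ k → e x k' = some v

/-- The always-diverging program. -/
def diverge : Program := fun _ _ => none

/-- The always-halting program. -/
def halt : Program := fun _ _ => some 0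

/-- Integer-coefficient polynomials as lists of monomials. -/
abbrev Poly := List (ℤ × List ℕ)

def evalMonomial (m : ℤ × List ℕ) (vars : List ℕ) : ℤ :=
  m.1 * (List.foldl (fun acc p => acc * (p.1 : ℤ) ^ p.2) 1 (vars.zip m.2))

def evalPoly (P : Poly) (vars : List ℕ) : ℤ :=
  List.foldl (fun acc m => acc + evalMonomial m vars) 0 P

def cantorPair (a b : ℕ) : ℕ := (a + b) * (a + b + 1) / 2 + b
def cantorW (n : ℕ) : ℕ := (Nat.sqrt (8 * n + 1) - 1) / 2
def cantorUnpairSnd (n : ℕ) : ℕ := n - (cantorW n) * (cantorW n + 1) / 2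
def cantorUnpairFst (n : ℕ) : ℕ := cantorW n - cantorUnpairSnd n

def decodeK : ℕ → ℕ → List ℕ
  | 0, _ => []
  | 1, n => [n]
  | k + 2, n => decodeK (k + 1) (cantorUnpairFst n) ++ [cantorUnpairSnd n]

def checkSolution (ar : ℕ) (P : Poly) (n : ℕ) : Bool :=
  decide (evalPoly P (decodeK ar n) = 0)

def isSolvable (ar : ℕ) (P : Poly) : Prop := ∃ n, checkSolution ar P n = true
def isUnsolvable (ar : ℕ) (P : Poly) : Prop := ∀ n, checkSolution ar P n = false

def findSol (ar : ℕ) (P : Poly) : ℕ → Option ℕ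
  | 0 => if checkSolution ar P 0 then some 0 else none
  | k + 1 =>
    match findSol ar P k with
    | some n => some n
    | none => if checkSolution ar P (k + 1) then some (k + 1) else none

/-- The two-witness construction. -/
def S_D (e0 e1 : Program) (ar : ℕ) (D : Poly) (b : Bool) : Program :=
  fun x fuel =>
    match findSol ar D fuel with
    | some _ => (if b then e1 else e0) x fuel
    | none => none

/-- h10c constraints. -/
inductive h10c where
  | one : ℕ → h10c
  | plus : ℕ → ℕ → ℕ → h10c
  | mult : ℕ → ℕ → ℕ → h10c

def h10cSem (c : h10c) (φ : ℕ → ℕ) : Prop :=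
  match c with
  | .one x => φ x = 1
  | .plus x y z => φ x + φ y = φ z
  | .mult x y z => φ x * φ y = φ z

def H10C_SAT (cs : List h10c) : Prop := ∃ φ : ℕ → ℕ, ∀ c ∈ cs, h10cSem c φ

/-- Nat-coefficient polynomials. -/
abbrev NatPoly := List (ℕ × List ℕ)

def evalNatMonomial (m : ℕ × List ℕ) (vars : List ℕ) : ℕ :=
  m.1 * (List.foldl (fun acc p => acc * p.1 ^ p.2) 1 (vars.zip m.2))

def evalNatPoly (P : NatPoly) (vars : List ℕ) : ℕ :=
  List.foldl (fun acc m => acc + evalNatMonomial m vars) 0 P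

def posMonomials (P : Poly) : NatPoly :=
  P.filterMap (fun m => if 0 < m.1 then some (m.1.toNat, m.2) else none)

def negMonomials (P : Poly) : NatPoly :=
  P.filterMap (fun m => if m.1 < 0 then some ((-m.1).toNat, m.2) else none)

/-- An h10c instance: arity, positive part, negative part. -/
abbrev H10cInst := ℕ × NatPoly × NatPoly

def H10cSat (inst : H10cInst) : Prop :=
  ∃ n, evalNatPoly inst.2.1 (decodeK inst.1 n) = evalNatPoly inst.2.2 (decodeK inst.1 n)

def h10cToPoly (inst : H10cInst) : Poly :=
  inst.2.1.map (fun m => ((m.1 : ℤ), m.2)) ++ inst.2.2.map (fun m => (-(m.1 : ℤ), m.2))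

/-- Pointwise addition of exponent lists. -/
def map2Add : List ℕ → List ℕ → List ℕ
  | x :: xs, y :: ys => (x + y) :: map2Add xs ys
  | _, _ => []

def monoMult (m1 m2 : ℕ × List ℕ) : ℕ × List ℕ := (m1.1 * m2.1, map2Add m1.2 m2.2)

def polyMult (p1 p2 : NatPoly) : NatPoly := p1.flatMap (fun m1 => p2.map (monoMult m1))

def polyScale (c : ℕ) (p : NatPoly) : NatPoly := p.map (fun m => (c * m.1, m.2))

def polySq (p : NatPoly) : NatPoly := polyMult p p

/-- Sum-of-squares conjunction encoding. -/
def conjEncode : List (NatPoly × NatPoly) → NatPoly × NatPoly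
  | [] => ([], [])
  | (p, n) :: rest =>
    let r := conjEncode rest
    (polySq p ++ polySq n ++ r.1, polyScale 2 (polyMult p n) ++ r.2)

/-- All exponent lists have length k. -/
def allLen (k : ℕ) (p : NatPoly) : Prop := ∀ m ∈ p, m.2.length = k

section FoldlAsSum

variable {α M : Type*}

theorem foldl_add_eq_sum_map [AddMonoid M] (g : α → M) (l : List α) :
    l.foldl (fun acc a => acc + g a) 0 = (l.map g).sum := by
  rw [List.sum_eq_foldl, List.foldl_map]

theorem foldl_mul_eq_prod_map [Monoid M] (g : α → M) (l : List α) :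
    l.foldl (fun acc a => acc * g a) 1 = (l.map g).prod := by
  rw [List.prod_eq_foldl, List.foldl_map]

end FoldlAsSum

def monomialValue (es vars : List ℕ) : ℕ :=
  ((vars.zip es).map fun p => p.1 ^ p.2).prod

theorem evalNatMonomial_eq (m : ℕ × List ℕ) (vars : List ℕ) :
    evalNatMonomial m vars = m.1 * monomialValue m.2 vars := by
  rw [evalNatMonomial, foldl_mul_eq_prod_map, monomialValue]

theorem evalNatMonomial_zero (es vars : List ℕ) : evalNatMonomial (0, es) vars = 0 := by
  simp [evalNatMonomial]

theorem evalMonomial_eq (m : ℤ × List ℕ) (vars : List ℕ) :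
    evalMonomial m vars = m.1 * monomialValue m.2 vars := by
  rw [evalMonomial, foldl_mul_eq_prod_map, monomialValue, Nat.cast_list_prod, List.map_map]
  rfl

theorem evalMonomial_eq_sub (m : ℤ × List ℕ) (vars : List ℕ) :
    evalMonomial m vars =
      (evalNatMonomial (m.1.toNat, m.2) vars : ℤ) - evalNatMonomial ((-m.1).toNat, m.2) vars := by
  rw [evalMonomial_eq, evalNatMonomial_eq, evalNatMonomial_eq]
  push_cast
  rw [← sub_mul, Int.toNat_sub_toNat_neg]

theorem evalPoly_eq_sum (P : Poly) (vars : List ℕ) :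
    evalPoly P vars = (P.map (evalMonomial · vars)).sum :=
  foldl_add_eq_sum_map _ P

theorem evalNatPoly_eq_sum (P : NatPoly) (vars : List ℕ) :
    evalNatPoly P vars = (P.map (evalNatMonomial · vars)).sum :=
  foldl_add_eq_sum_map _ P

theorem evalNatPoly_posMonomials (P : Poly) (vars : List ℕ) :
    evalNatPoly (posMonomials P) vars =
      (P.map fun m => evalNatMonomial (m.1.toNat, m.2) vars).sum := by
  rw [evalNatPoly_eq_sum, posMonomials]
  induction P with
  | nil => rfl
  | cons m P ih =>
    by_cases hm : 0 < m.1
    · simp [hm, ih]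
    · simp [hm, ih, Int.toNat_of_nonpos (not_lt.mp hm), evalNatMonomial_zero]

theorem evalNatPoly_negMonomials (P : Poly) (vars : List ℕ) :
    evalNatPoly (negMonomials P) vars =
      (P.map fun m => evalNatMonomial ((-m.1).toNat, m.2) vars).sum := by
  rw [evalNatPoly_eq_sum, negMonomials]
  induction P with
  | nil => rfl
  | cons m P ih =>
    by_cases hm : m.1 < 0
    · simp [hm, ih]
    · simp [hm, ih, Int.toNat_of_nonpos (by omega : -m.1 ≤ 0), evalNatMonomial_zero]

theorem evalPoly_eq_sub (P : Poly) (vars : List ℕ) :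
    evalPoly P vars =
      (evalNatPoly (posMonomials P) vars : ℤ) - evalNatPoly (negMonomials P) vars := by
  rw [evalPoly_eq_sum, evalNatPoly_posMonomials, evalNatPoly_negMonomials, eq_sub_iff_add_eq,
    Nat.cast_list_sum, Nat.cast_list_sum, List.map_map, List.map_map, ← List.sum_map_add]
  congr 1
  exact List.map_congr_left fun m _ => by simp [evalMonomial_eq_sub]

/-- The encoding of a polynomial as an h10c instance is correct. -/
theorem poly_encode_correct (ar : ℕ) (P : Poly) :
    isSolvable ar P ↔
      ∃ n, evalNatPoly (posMonomials P) (decodeK ar n) =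
           evalNatPoly (negMonomials P) (decodeK ar n) := by
  simp only [isSolvable, checkSolution, decide_eq_true_eq, evalPoly_eq_sub, sub_eq_zero, Nat.cast_inj]

end Rice
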